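/- arXiv:1812.10293 — 9 statements merged into one kernel-verified Lean document; each statement's English description precedes it below -/
import Mathlib

section
/- In the Mussa–Rosen model with the fixed-market-share collusive scheme, for an intermediate firm i (1<i<n), the gain from optimal deviation equals π_i^d − π_i^c = K_i · (1/4)Δ², where K_i = (v_{i+1}−v_{i-1})/((v_{i+1}−v_i)(v_i−v_{i-1})), Δ = p_1^c − p_1^*, π_i^d = π_i(p_{i-1}^c, p̂_i(p_{i-1}^c,p_{i+1}^c), p_{i+1}^c) and π_i^c = π_i(p_{i-1}^c, p_i^c, p_{i+1}^c). In particular, the gain from deviation does not depend on firm i's cost or price–cost margin. -/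
/-- Mussa–Rosen model with the fixed-market-share collusive scheme: for an
intermediate firm, the gain from optimal deviation equals `K·(1/4)Δ²`, with
`K = (vnext−vprev)/((vnext−v)(v−vprev))`; in particular it does not depend on
the firm's cost or price–cost margin. -/
theorem deviation_gain_formula
    (vprev v vnext c pmStar pStar ppStar Δ pd : ℝ)
    (hv0 : 0 < vprev) (hv1 : vprev < v) (hv2 : v < vnext) (hΔ : 0 < Δ)
    (hnash : pStar = (1/2) * (pmStar * (vnext - v) + ppStar * (v - vprev)) / (vnext - vprev)
      + (1/2) * c)
    (hpd : pd = (1/2) * ((pmStar + Δ) * (vnext - v) + (ppStar + Δ) * (v - vprev))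
      / (vnext - vprev) + (1/2) * c) :
    (pd - c) * (((ppStar + Δ) - pd) / (vnext - v) - (pd - (pmStar + Δ)) / (v - vprev))
      - ((pStar + Δ) - c) * (((ppStar + Δ) - (pStar + Δ)) / (vnext - v)
          - ((pStar + Δ) - (pmStar + Δ)) / (v - vprev))
      = ((vnext - vprev) / ((vnext - v) * (v - vprev))) * ((1/4) * Δ ^ 2) := by
  have h1 : vnext - v ≠ 0 := by linarith
  have h2 : v - vprev ≠ 0 := by linarith
  have h3 : vnext - vprev ≠ 0 := by linarith
  subst hnash hpd
  field_simp
  ring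
end

section
/- In the Mussa–Rosen model with the fixed-market-share collusive scheme, for an intermediate firm i (1<i<n), the deviation profit exceeds the Nash profit by π_i^d − π_i^* = K_i · Δ · ((1/4)Δ + (p_i^* − c_i)), where K_i = (v_{i+1}−v_{i-1})/((v_{i+1}−v_i)(v_i−v_{i-1})), Δ = p_1^c − p_1^*, π_i^d = π_i(p_{i-1}^c, p̂_i(p_{i-1}^c,p_{i+1}^c), p_{i+1}^c) and π_i^* = π_i(p_{i-1}^*, p_i^*, p_{i+1}^*). -/
/-- Mussa–Rosen model with the fixed-market-share collusive scheme: for an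
intermediate firm, the deviation profit exceeds the Nash profit by
`K·Δ·((1/4)Δ + (p* − c))`, with `K = (vnext−vprev)/((vnext−v)(v−vprev))`. -/
theorem deviation_minus_nash_formula
    (vprev v vnext c pmStar pStar ppStar Δ pd : ℝ)
    (hv0 : 0 < vprev) (hv1 : vprev < v) (hv2 : v < vnext) (hΔ : 0 < Δ)
    (hnash : pStar = (1/2) * (pmStar * (vnext - v) + ppStar * (v - vprev)) / (vnext - vprev)
      + (1/2) * c)
    (hpd : pd = (1/2) * ((pmStar + Δ) * (vnext - v) + (ppStar + Δ) * (v - vprev))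
      / (vnext - vprev) + (1/2) * c) :
    (pd - c) * (((ppStar + Δ) - pd) / (vnext - v) - (pd - (pmStar + Δ)) / (v - vprev))
      - (pStar - c) * ((ppStar - pStar) / (vnext - v) - (pStar - pmStar) / (v - vprev))
      = ((vnext - vprev) / ((vnext - v) * (v - vprev))) * Δ * ((1/4) * Δ + (pStar - c)) := by
  have h1 : vnext - v ≠ 0 := by linarith
  have h2 : v - vprev ≠ 0 := by linarith
  have h3 : vnext - vprev ≠ 0 := by linarith
  subst hnash hpd
  field_simp
  ring
end

section
/- In the Mussa–Rosen model with the fixed-market-share collusive scheme, for an intermediate firm i (1<i<n) with Δ = p_1^c − p_1^* > 0 and noncollusive margin m_i = p_i^* − c_i > 0, the critical discount factor equals δ̄_i ≡ (π_i^d − π_i^c)/(π_i^d − π_i^*) = ((1/4)Δ)/((1/4)Δ + m_i), and for any common discount factor δ ∈ (0,1) the incentive compatibility constraint Ω_i ≡ π_i^c − (1−δ)π_i^d − δπ_i^* ≥ 0 holds if and only if δ ≥ δ̄_i. -/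
/-!
Between its neighbours at distances `a = v_{i+1} - v_i` and `b = v_i - v_{i-1}`, firm `i` faces
the linear residual demand `K (s - p)` with slope `K = 1/a + 1/b` and choke price
`s = (p_{i-1} a + p_{i+1} b) / (a + b)`. The Nash price is `(s + c)/2`, so `s - c = 2m`. Raising
both neighbours' prices by `Δ` raises `s` by `Δ` and the best reply by `Δ/2`, whence
`π* = K m²`, `π^c = K m (m + Δ)` and `π^d = K (m + Δ/2)²`. Thus `π^d - π^c = K Δ²/4` and
`π^d - π* = K Δ (m + Δ/4)`, and the common factor `K Δ` cancels from the critical ratio.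
-/

/-- The price at which firm `i`'s residual demand vanishes. -/
noncomputable def residualChoke (a b pm pp : ℝ) : ℝ := (pm * a + pp * b) / (a + b)

lemma residualChoke_add_add {a b : ℝ} (hab : a + b ≠ 0) (pm pp Δ : ℝ) :
    residualChoke a b (pm + Δ) (pp + Δ) = residualChoke a b pm pp + Δ := by
  unfold residualChoke
  field_simp
  ring

lemma price_formula_eq_residualChoke_add_div_two (a b pm pp c : ℝ) :
    (1/2) * (pm * a + pp * b) / (a + b) + (1/2) * c = (residualChoke a b pm pp + c) / 2 := by
  unfold residualChoke
  ring

lemma residual_demand_eq {a b : ℝ} (ha : 0 < a) (hb : 0 < b) (pm p pp : ℝ) :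
    (pp - p) / a - (p - pm) / b = (a⁻¹ + b⁻¹) * (residualChoke a b pm pp - p) := by
  unfold residualChoke
  field_simp
  ring

lemma incentive_constraint_iff {πd πc πst : ℝ} (hpos : 0 < πd - πst) (δ : ℝ) :
    πc - (1 - δ) * πd - δ * πst ≥ 0 ↔ (πd - πc) / (πd - πst) ≤ δ := by
  rw [div_le_iff₀ hpos, ge_iff_le]
  constructor <;> intro h <;> linarith

theorem critical_discount_factor_intermediate_general
    (vprev v vnext c pmStar pStar ppStar Δ pd πd πc πst : ℝ)
    (hv1 : vprev < v) (hv2 : v < vnext)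
    (hΔ : 0 < Δ) (hm : 0 < pStar - c)
    (hnash : pStar = (1/2) * (pmStar * (vnext - v) + ppStar * (v - vprev)) / (vnext - vprev)
      + (1/2) * c)
    (hpd : pd = (1/2) * ((pmStar + Δ) * (vnext - v) + (ppStar + Δ) * (v - vprev))
      / (vnext - vprev) + (1/2) * c)
    (hπd : πd = (pd - c) * (((ppStar + Δ) - pd) / (vnext - v)
      - (pd - (pmStar + Δ)) / (v - vprev)))
    (hπc : πc = ((pStar + Δ) - c) * (((ppStar + Δ) - (pStar + Δ)) / (vnext - v)
      - ((pStar + Δ) - (pmStar + Δ)) / (v - vprev)))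
    (hπst : πst = (pStar - c) * ((ppStar - pStar) / (vnext - v)
      - (pStar - pmStar) / (v - vprev))) :
    (πd - πc) / (πd - πst) = ((1/4) * Δ) / ((1/4) * Δ + (pStar - c))
    ∧ ∀ δ : ℝ, 0 < δ → δ < 1 →
        (πc - (1 - δ) * πd - δ * πst ≥ 0 ↔
          ((1/4) * Δ) / ((1/4) * Δ + (pStar - c)) ≤ δ) := by
  have ha : 0 < vnext - v := by linarith
  have hb : 0 < v - vprev := by linarith
  have hab : (vnext - v) + (v - vprev) = vnext - vprev := by ring
  have hchoke : (vnext - v) + (v - vprev) ≠ 0 := by linarith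
  set s := residualChoke (vnext - v) (v - vprev) pmStar ppStar
  set K := (vnext - v)⁻¹ + (v - vprev)⁻¹
  have hK : 0 < K := by positivity
  have hs : pStar = (s + c) / 2 := by
    rw [hnash, ← hab, price_formula_eq_residualChoke_add_div_two]
  have hpd' : pd = (s + Δ + c) / 2 := by
    rw [hpd, ← hab, price_formula_eq_residualChoke_add_div_two, residualChoke_add_add hchoke]
  have hπst' : πst = K * (pStar - c) ^ 2 := by
    rw [hπst, residual_demand_eq ha hb, hs]; ring
  have hπc' : πc = K * (pStar - c) * (pStar - c + Δ) := by
    rw [hπc, residual_demand_eq ha hb, residualChoke_add_add hchoke, hs]; ring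
  have hπd' : πd = K * (pStar - c + Δ / 2) ^ 2 := by
    rw [hπd, residual_demand_eq ha hb, residualChoke_add_add hchoke, hpd', hs]; ring
  have hgain : 0 < πd - πst := by
    rw [hπd', hπst']; nlinarith [mul_pos hK hΔ, mul_pos (mul_pos hK hΔ) hm]
  have hratio : (πd - πc) / (πd - πst) = ((1/4) * Δ) / ((1/4) * Δ + (pStar - c)) := by
    rw [div_eq_div_iff hgain.ne' (by linarith), hπd', hπc', hπst']
    ring
  exact ⟨hratio, fun δ _ _ => hratio ▸ incentive_constraint_iff hgain δ⟩

/-- Mussa–Rosen model with the fixed-market-share collusive scheme: for an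
intermediate firm with `Δ = p_1^c − p_1^* > 0` and noncollusive margin
`m = p* − c > 0`, the critical discount factor equals
`δ̄ = (π^d − π^c)/(π^d − π^*) = ((1/4)Δ)/((1/4)Δ + m)`, and for `δ ∈ (0,1)` the
incentive constraint `Ω = π^c − (1−δ)π^d − δπ^* ≥ 0` holds iff `δ ≥ δ̄`. -/
theorem critical_discount_factor_intermediate
    (vprev v vnext c pmStar pStar ppStar Δ pd πd πc πst : ℝ)
    (hv0 : 0 < vprev) (hv1 : vprev < v) (hv2 : v < vnext)
    (hΔ : 0 < Δ) (hm : 0 < pStar - c)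
    (hnash : pStar = (1/2) * (pmStar * (vnext - v) + ppStar * (v - vprev)) / (vnext - vprev)
      + (1/2) * c)
    (hpd : pd = (1/2) * ((pmStar + Δ) * (vnext - v) + (ppStar + Δ) * (v - vprev))
      / (vnext - vprev) + (1/2) * c)
    (hπd : πd = (pd - c) * (((ppStar + Δ) - pd) / (vnext - v)
      - (pd - (pmStar + Δ)) / (v - vprev)))
    (hπc : πc = ((pStar + Δ) - c) * (((ppStar + Δ) - (pStar + Δ)) / (vnext - v)
      - ((pStar + Δ) - (pmStar + Δ)) / (v - vprev)))
    (hπst : πst = (pStar - c) * ((ppStar - pStar) / (vnext - v)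
      - (pStar - pmStar) / (v - vprev))) :
    (πd - πc) / (πd - πst) = ((1/4) * Δ) / ((1/4) * Δ + (pStar - c))
    ∧ ∀ δ : ℝ, 0 < δ → δ < 1 →
        (πc - (1 - δ) * πd - δ * πst ≥ 0 ↔
          ((1/4) * Δ) / ((1/4) * Δ + (pStar - c)) ≤ δ) :=
  critical_discount_factor_intermediate_general vprev v vnext c pmStar pStar ppStar Δ pd πd πc πst
    hv1 hv2 hΔ hm hnash hpd hπd hπc hπst
end

section
/- In the Mussa–Rosen model with the fixed-market-share collusive scheme, the top firm n satisfies π_n^d = (p_n^d − c_n)²/(v_n − v_{n-1}) and π_n^* = (p_n^* − c_n)²/(v_n − v_{n-1}), where p_n^d = p̂_n(p_{n-1}^c) and p_n^* = p̂_n(p_{n-1}^*), and its collusive profit equals π_n^c = (Δ + p_n^* − c_n)·(θ̄(v_n−v_{n-1}) − (p_n^* − p_{n-1}^*))/(v_n−v_{n-1}); consequently, if Δ = p_1^c − p_1^* > 0 and p_n^* − c_n > 0, its critical discount factor equals δ̄_n = (π_n^d − π_n^c)/(π_n^d − π_n^*) = ((1/4)Δ)/((1/4)Δ + (p_n^* −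 c_n)). -/
/-!
At a best response `p = (q + c + θ̄ V)/2` the top firm's market share `θ̄ − (p − q)/V` equals
its margin `(p − c)/V`, so its profit is `(p − c)²/V`; this gives `π^d` and `π^*`. The collusive
prices are the Nash prices shifted by `Δ`, which leaves the market share at its Nash value
`(p^* − c)/V` while raising the margin by `Δ`, and the deviation price is `p^* + Δ/2`.
Hence `π^d − π^c = Δ²/(4V)` and `π^d − π^* = Δ(Δ/4 + p^* − c)/V`, and `Δ` and `V` cancel.
-/

noncomputable section

namespace MussaRosen

variable {c θ V q p Δ : ℝ}

/-- Top firm's market share `θ̄ − θ_{n−1}` at own price `p`, neighbour's price `q` and quality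
gap `V = v_n − v_{n−1}`. -/
def topShare (θ V q p : ℝ) : ℝ := θ - (p - q) / V

def topProfit (c θ V q p : ℝ) : ℝ := (p - c) * topShare θ V q p

def topBestResponse (c θ V q : ℝ) : ℝ := 1 / 2 * (q + c + θ * V)

theorem topShare_eq_div (hV : V ≠ 0) : topShare θ V q p = (θ * V - (p - q)) / V := by
  rw [topShare, sub_div (θ * V), mul_div_cancel_right₀ _ hV]

theorem topShare_add_add : topShare θ V (q + Δ) (p + Δ) = topShare θ V q p := by
  rw [topShare, topShare, add_sub_add_right_eq_sub]

theorem topShare_topBestResponse (hV : V ≠ 0) :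
    topShare θ V q (topBestResponse c θ V q) = (topBestResponse c θ V q - c) / V := by
  rw [topShare_eq_div hV, topBestResponse]
  ring_nf

theorem topProfit_topBestResponse (hV : V ≠ 0) :
    topProfit c θ V q (topBestResponse c θ V q) = (topBestResponse c θ V q - c) ^ 2 / V := by
  rw [topProfit, topShare_topBestResponse hV]
  ring

theorem topProfit_add_add :
    topProfit c θ V (q + Δ) (p + Δ) = (Δ + p - c) * topShare θ V q p := by
  rw [topProfit, topShare_add_add]
  ring

theorem deviation_gain_div_punishment_loss (hV : V ≠ 0) (hΔ : Δ ≠ 0) :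
    ((p + Δ / 2 - c) ^ 2 / V - (Δ + p - c) * ((p - c) / V)) /
        ((p + Δ / 2 - c) ^ 2 / V - (p - c) ^ 2 / V) =
      (1 / 4 * Δ) / (1 / 4 * Δ + (p - c)) :=
  calc _ = Δ * (1 / 4 * Δ) / V / (Δ * (1 / 4 * Δ + (p - c)) / V) := by ring
    _ = _ := by rw [div_div_div_cancel_right₀ hV, mul_div_mul_left _ _ hΔ]

end MussaRosen

end

open MussaRosen in
theorem top_firm_critical_discount_factor_general
    (vprev vn cn θhi pmStar pStar Δ pd πd πc πst : ℝ)
    (hv : vprev < vn)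
    (hΔ : 0 < Δ)
    (hnash : pStar = (1/2) * (pmStar + cn + θhi * (vn - vprev)))
    (hpd : pd = (1/2) * ((pmStar + Δ) + cn + θhi * (vn - vprev)))
    (hπd : πd = (pd - cn) * (θhi - (pd - (pmStar + Δ)) / (vn - vprev)))
    (hπc : πc = ((pStar + Δ) - cn) * (θhi - ((pStar + Δ) - (pmStar + Δ)) / (vn - vprev)))
    (hπst : πst = (pStar - cn) * (θhi - (pStar - pmStar) / (vn - vprev))) :
    πd = (pd - cn) ^ 2 / (vn - vprev)
    ∧ πst = (pStar - cn) ^ 2 / (vn - vprev)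
    ∧ πc = (Δ + pStar - cn) * ((θhi * (vn - vprev) - (pStar - pmStar)) / (vn - vprev))
    ∧ (πd - πc) / (πd - πst) = ((1/4) * Δ) / ((1/4) * Δ + (pStar - cn)) := by
  have hV : vn - vprev ≠ 0 := (sub_pos.2 hv).ne'
  have hpd' : pd = pStar + Δ / 2 := by rw [hpd, hnash]; ring
  have hd : πd = (pd - cn) ^ 2 / (vn - vprev) := by
    rw [hπd, hpd]; exact topProfit_topBestResponse hV
  have hst : πst = (pStar - cn) ^ 2 / (vn - vprev) := by
    rw [hπst, hnash]; exact topProfit_topBestResponse hV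
  have hc : πc = (Δ + pStar - cn) * topShare θhi (vn - vprev) pmStar pStar :=
    hπc.trans topProfit_add_add
  have hshare : topShare θhi (vn - vprev) pmStar pStar = (pStar - cn) / (vn - vprev) := by
    rw [hnash]; exact topShare_topBestResponse hV
  refine ⟨hd, hst, hc.trans (congrArg _ (topShare_eq_div hV)), ?_⟩
  rw [hd, hst, hc, hshare, hpd']
  exact deviation_gain_div_punishment_loss hV hΔ.ne'

/-- Mussa–Rosen model with the fixed-market-share collusive scheme: the top firm
satisfies `π_n^d = (p_n^d−c_n)²/(v_n−v_{n-1})`, `π_n^* = (p_n^*−c_n)²/(v_n−v_{n-1})`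
and `π_n^c = (Δ+p_n^*−c_n)·(θ̄(v_n−v_{n-1})−(p_n^*−p_{n-1}^*))/(v_n−v_{n-1})`;
consequently, with `Δ > 0` and a positive margin, its critical discount factor
equals `((1/4)Δ)/((1/4)Δ + (p_n^*−c_n))`. -/
theorem top_firm_critical_discount_factor
    (vprev vn cn θhi pmStar pStar Δ pd πd πc πst : ℝ)
    (hv0 : 0 < vprev) (hv : vprev < vn)
    (hΔ : 0 < Δ) (hm : 0 < pStar - cn)
    (hnash : pStar = (1/2) * (pmStar + cn + θhi * (vn - vprev)))
    (hpd : pd = (1/2) * ((pmStar + Δ) + cn + θhi * (vn - vprev)))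
    (hπd : πd = (pd - cn) * (θhi - (pd - (pmStar + Δ)) / (vn - vprev)))
    (hπc : πc = ((pStar + Δ) - cn) * (θhi - ((pStar + Δ) - (pmStar + Δ)) / (vn - vprev)))
    (hπst : πst = (pStar - cn) * (θhi - (pStar - pmStar) / (vn - vprev))) :
    πd = (pd - cn) ^ 2 / (vn - vprev)
    ∧ πst = (pStar - cn) ^ 2 / (vn - vprev)
    ∧ πc = (Δ + pStar - cn) * ((θhi * (vn - vprev) - (pStar - pmStar)) / (vn - vprev))
    ∧ (πd - πc) / (πd - πst) = ((1/4) * Δ) / ((1/4) * Δ + (pStar - cn)) :=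
  top_firm_critical_discount_factor_general vprev vn cn θhi pmStar pStar Δ pd πd πc πst hv hΔ hnash
    hpd hπd hπc hπst
end

section
/- In the Mussa–Rosen model with the fixed-market-share collusive scheme, the bottom firm 1 satisfies π_1^d = (p_1^d − c_1)²/(v_2 − v_1) with p_1^d = p̂_1(p_2^c), π_1^* = (p_1^* − c_1)²/(v_2 − v_1), and π_1^c = (p_1^c − c_1)(p_1^* − c_1)/(v_2 − v_1); consequently, if Δ = p_1^c − p_1^* > 0 and p_1^* − c_1 > 0, its critical discount factor equals δ̄_1 = (π_1^d − π_1^c)/(π_1^d − π_1^*) = ((1/4)Δ)/((1/4)Δ + (p_1^* − c_1)). -/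
/-!
At a best response `p = (q + c - θ V) / 2` of the bottom firm its demand `(q - p) / V - θ` equals
its margin over `V`, so its profit is the squared margin over `V`. Collusion raises both prices by
`Δ`, which leaves the demand at its Nash value, and the deviation price exceeds `p₁*` by `Δ / 2`.
With `m = p₁* - c₁` the three profits are `(m + Δ/2)² / V`, `(m + Δ) m / V` and `m² / V`, whose
differences are `Δ · (Δ/4) / V` and `Δ · (Δ/4 + m) / V`.
-/

namespace MussaRosen

variable {V θ c p q : ℝ}

lemma demand_eq_margin_div_of_bestResponse (hV : V ≠ 0) (hp : p = 1 / 2 * (q + c - θ * V)) :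
    (q - p) / V - θ = (p - c) / V := by
  field_simp
  linarith

lemma profit_eq_sq_div_of_bestResponse (hV : V ≠ 0) (hp : p = 1 / 2 * (q + c - θ * V)) :
    (p - c) * ((q - p) / V - θ) = (p - c) ^ 2 / V := by
  rw [demand_eq_margin_div_of_bestResponse hV hp, ← mul_div_assoc, ← sq]

lemma critical_discount_eq {m Δ : ℝ} (hV : V ≠ 0) (hΔ : Δ ≠ 0) :
    ((m + Δ / 2) ^ 2 / V - (m + Δ) * m / V) / ((m + Δ / 2) ^ 2 / V - m ^ 2 / V)
      = 1 / 4 * Δ / (1 / 4 * Δ + m) := by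
  have hnum : (m + Δ / 2) ^ 2 / V - (m + Δ) * m / V = Δ * (1 / 4 * Δ) / V := by ring
  have hden : (m + Δ / 2) ^ 2 / V - m ^ 2 / V = Δ * (1 / 4 * Δ + m) / V := by ring
  rw [hnum, hden, div_div_div_cancel_right₀ hV, mul_div_mul_left _ _ hΔ]

end MussaRosen

open MussaRosen in
theorem bottom_firm_critical_discount_factor_general
    (v1 v2 c1 θlo p1Star p2Star Δ pd πd πc πst : ℝ)
    (hv : v1 < v2)
    (hΔ : 0 < Δ)
    (hnash : p1Star = (1/2) * (p2Star + c1 - θlo * (v2 - v1)))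
    (hpd : pd = (1/2) * ((p2Star + Δ) + c1 - θlo * (v2 - v1)))
    (hπd : πd = (pd - c1) * (((p2Star + Δ) - pd) / (v2 - v1) - θlo))
    (hπc : πc = ((p1Star + Δ) - c1) * (((p2Star + Δ) - (p1Star + Δ)) / (v2 - v1) - θlo))
    (hπst : πst = (p1Star - c1) * ((p2Star - p1Star) / (v2 - v1) - θlo)) :
    πd = (pd - c1) ^ 2 / (v2 - v1)
    ∧ πst = (p1Star - c1) ^ 2 / (v2 - v1)
    ∧ πc = ((p1Star + Δ) - c1) * (p1Star - c1) / (v2 - v1)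
    ∧ (πd - πc) / (πd - πst) = ((1/4) * Δ) / ((1/4) * Δ + (p1Star - c1)) := by
  have hV : v2 - v1 ≠ 0 := (sub_pos.2 hv).ne'
  have hd : πd = (pd - c1) ^ 2 / (v2 - v1) := hπd.trans (profit_eq_sq_div_of_bestResponse hV hpd)
  have hst : πst = (p1Star - c1) ^ 2 / (v2 - v1) :=
    hπst.trans (profit_eq_sq_div_of_bestResponse hV hnash)
  have hc : πc = ((p1Star + Δ) - c1) * (p1Star - c1) / (v2 - v1) := by
    rw [hπc, add_sub_add_right_eq_sub, demand_eq_margin_div_of_bestResponse hV hnash,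
      mul_div_assoc]
  refine ⟨hd, hst, hc, ?_⟩
  have hpd_margin : pd - c1 = (p1Star - c1) + Δ / 2 := by linarith
  rw [hd, hc, hst, hpd_margin, show p1Star + Δ - c1 = (p1Star - c1) + Δ by ring]
  exact critical_discount_eq hV hΔ.ne'

/-- Mussa–Rosen model with the fixed-market-share collusive scheme: the bottom
firm satisfies `π_1^d = (p_1^d−c_1)²/(v_2−v_1)`, `π_1^* = (p_1^*−c_1)²/(v_2−v_1)`
and `π_1^c = (p_1^c−c_1)(p_1^*−c_1)/(v_2−v_1)`; consequently, with `Δ > 0` and a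
positive margin, its critical discount factor equals
`((1/4)Δ)/((1/4)Δ + (p_1^*−c_1))`. -/
theorem bottom_firm_critical_discount_factor
    (v1 v2 c1 θlo p1Star p2Star Δ pd πd πc πst : ℝ)
    (hv0 : 0 < v1) (hv : v1 < v2) (hθ : 0 < θlo)
    (hΔ : 0 < Δ) (hm : 0 < p1Star - c1)
    (hnash : p1Star = (1/2) * (p2Star + c1 - θlo * (v2 - v1)))
    (hpd : pd = (1/2) * ((p2Star + Δ) + c1 - θlo * (v2 - v1)))
    (hπd : πd = (pd - c1) * (((p2Star + Δ) - pd) / (v2 - v1) - θlo))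
    (hπc : πc = ((p1Star + Δ) - c1) * (((p2Star + Δ) - (p1Star + Δ)) / (v2 - v1) - θlo))
    (hπst : πst = (p1Star - c1) * ((p2Star - p1Star) / (v2 - v1) - θlo)) :
    πd = (pd - c1) ^ 2 / (v2 - v1)
    ∧ πst = (p1Star - c1) ^ 2 / (v2 - v1)
    ∧ πc = ((p1Star + Δ) - c1) * (p1Star - c1) / (v2 - v1)
    ∧ (πd - πc) / (πd - πst) = ((1/4) * Δ) / ((1/4) * Δ + (p1Star - c1)) :=
  bottom_firm_critical_discount_factor_general v1 v2 c1 θlo p1Star p2Star Δ pd πd πc πst hv hΔ hnash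
    hpd hπd hπc hπst
end

section
/- In the two-step-uniform duopoly model, the unique solution of the best-response system p_1 = (1/2)(p_2 − (v_2−v_1)θ̲ + c_1) and p_2 = ((v_2−v_1)(θ̃ − θ̲(1−s)) + s·p_1 + s·c_2)/(2s) is given by p_1^* = ((v_2−v_1)(θ̃ − θ̲(1+s)) + 2s·c_1 + s·c_2)/(3s) and p_2^* = ((v_2−v_1)(2(θ̃−θ̲) + θ̲·s) + 2s·c_2 + s·c_1)/(3s), and the corresponding Nash profits equal π_1^* = (p_1^*−c_1)²·s/((v_2−v_1)(θ̃−θ̲)) and π_2^* = (p_2^*−c_2)²·s/((v_2−v_1)(θ̃−θ̲)). -/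
/-- Two-step-uniform duopoly: the stated prices `p_1^*, p_2^*` are the unique
solution of the best-response system, and the corresponding Nash profits equal
`(p_i^*−c_i)²·s/((v_2−v_1)(θ̃−θ̲))`. -/
theorem two_step_uniform_nash
    (v1 v2 c1 c2 θlo θt θhi s p1s p2s : ℝ)
    (hv0 : 0 < v1) (hv : v1 < v2) (hc1 : 0 < c1) (hc2 : 0 < c2)
    (hθ0 : 0 < θlo) (hθ1 : θlo < θt) (hθ2 : θt < θhi) (hs0 : 0 < s) (hs1 : s < 1)
    (hp1 : p1s = ((v2 - v1) * (θt - θlo * (1 + s)) + 2 * s * c1 + s * c2) / (3 * s))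
    (hp2 : p2s = ((v2 - v1) * (2 * (θt - θlo) + θlo * s) + 2 * s * c2 + s * c1) / (3 * s)) :
    (p1s = (1/2) * (p2s - (v2 - v1) * θlo + c1)
      ∧ p2s = ((v2 - v1) * (θt - θlo * (1 - s)) + s * p1s + s * c2) / (2 * s))
    ∧ (∀ q1 q2 : ℝ,
        q1 = (1/2) * (q2 - (v2 - v1) * θlo + c1) →
        q2 = ((v2 - v1) * (θt - θlo * (1 - s)) + s * q1 + s * c2) / (2 * s) →
        q1 = p1s ∧ q2 = p2s)
    ∧ (p1s - c1) * ((p2s - p1s) / (v2 - v1) - θlo) * (s / (θt - θlo))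
        = (p1s - c1) ^ 2 * s / ((v2 - v1) * (θt - θlo))
    ∧ (p2s - c2) * ((θt - (p2s - p1s) / (v2 - v1)) * (s / (θt - θlo)) + (1 - s))
        = (p2s - c2) ^ 2 * s / ((v2 - v1) * (θt - θlo)) := by
  have hs : s ≠ 0 := ne_of_gt hs0
  have hvne : v2 - v1 ≠ 0 := by linarith
  have hθne : θt - θlo ≠ 0 := by linarith
  subst hp1 hp2
  refine ⟨⟨by field_simp; ring, by field_simp; ring⟩, ?_, by field_simp; ring, by field_simp; ring⟩
  intro q1 q2 hq1 hq2
  have h2 : 2 * s * q2 = (v2 - v1) * (θt - θlo * (1 - s)) + s * q1 + s * c2 := by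
    rw [hq2]; field_simp
  have h3 : 2 * (s * q1) = s * q2 - s * ((v2 - v1) * θlo) + s * c1 := by
    linear_combination 2 * s * hq1
  constructor
  · rw [hq1]; field_simp; linarith [h2, h3]
  · field_simp; linarith [h2, h3]
end

section
/- In the two-step-uniform duopoly model with Nash prices p_1^*, p_2^*, fixed-market-share collusive prices p_1^c (with Δ = p_1^c − p_1^* > 0) and p_2^c = p_2^* + Δ, deviation prices p_1^d = (1/2)(p_2^c − (v_2−v_1)θ̲ + c_1) and p_2^d = ((v_2−v_1)(θ̃ − θ̲(1−s)) + s·p_1^c + s·c_2)/(2s), and positive margins m_i = p_i^* − c_i, the critical discount factors equal δ̄_1 = (π_1^d − π_1^c)/(π_1^d − π_1^*) = ((1/4)Δ)/((1/4)Δ + m_1) and δ̄_2 = (π_2^d − π_2^c)/(π_2^d − π_2^*) = ((1/4)Δ)/((1/4)Δ + m_2); in particular the form of the critical discount factors is the same as under the uniform distribution. -/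
set_option maxHeartbeats 2000000 in
/-- Two-step-uniform duopoly with the fixed-market-share collusive scheme: the
critical discount factors equal `δ̄_i = ((1/4)Δ)/((1/4)Δ + m_i)`, the same form
as under the uniform distribution. -/
theorem two_step_uniform_critical_discount_factors
    (v1 v2 c1 c2 θlo θt θhi s p1s p2s pc1 pc2 Δ pd1 pd2
      π1d π1c π1s π2d π2c π2s : ℝ)
    (hv0 : 0 < v1) (hv : v1 < v2) (hc1 : 0 < c1) (hc2 : 0 < c2)
    (hθ0 : 0 < θlo) (hθ1 : θlo < θt) (hθ2 : θt < θhi) (hs0 : 0 < s) (hs1 : s < 1)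
    (hp1 : p1s = ((v2 - v1) * (θt - θlo * (1 + s)) + 2 * s * c1 + s * c2) / (3 * s))
    (hp2 : p2s = ((v2 - v1) * (2 * (θt - θlo) + θlo * s) + 2 * s * c2 + s * c1) / (3 * s))
    (hΔdef : Δ = pc1 - p1s) (hΔ : 0 < Δ) (hpc2 : pc2 = p2s + Δ)
    (hm1 : 0 < p1s - c1) (hm2 : 0 < p2s - c2)
    (hpd1 : pd1 = (1/2) * (pc2 - (v2 - v1) * θlo + c1))
    (hpd2 : pd2 = ((v2 - v1) * (θt - θlo * (1 - s)) + s * pc1 + s * c2) / (2 * s))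
    (hπ1d : π1d = (pd1 - c1) * ((pc2 - pd1) / (v2 - v1) - θlo) * (s / (θt - θlo)))
    (hπ1c : π1c = (pc1 - c1) * ((pc2 - pc1) / (v2 - v1) - θlo) * (s / (θt - θlo)))
    (hπ1s : π1s = (p1s - c1) * ((p2s - p1s) / (v2 - v1) - θlo) * (s / (θt - θlo)))
    (hπ2d : π2d = (pd2 - c2) * ((θt - (pd2 - pc1) / (v2 - v1)) * (s / (θt - θlo)) + (1 - s)))
    (hπ2c : π2c = (pc2 - c2) * ((θt - (pc2 - pc1) / (v2 - v1)) * (s / (θt - θlo)) + (1 - s)))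
    (hπ2s : π2s = (p2s - c2) * ((θt - (p2s - p1s) / (v2 - v1)) * (s / (θt - θlo)) + (1 - s))) :
    (π1d - π1c) / (π1d - π1s) = ((1/4) * Δ) / ((1/4) * Δ + (p1s - c1))
    ∧ (π2d - π2c) / (π2d - π2s) = ((1/4) * Δ) / ((1/4) * Δ + (p2s - c2)) := by
  have ha : v2 - v1 ≠ 0 := by linarith
  have ht : θt - θlo ≠ 0 := by linarith
  have hsne : s ≠ 0 := ne_of_gt hs0
  have hK : s / ((θt - θlo) * (v2 - v1)) ≠ 0 :=
    div_ne_zero hsne (mul_ne_zero ht ha)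
  have hdne : Δ ≠ 0 := ne_of_gt hΔ
  have hbr1 : p2s = 2 * p1s + (v2 - v1) * θlo - c1 := by
    rw [hp1, hp2]; field_simp; ring
  have hbr2 : p2s = ((v2 - v1) * (θt - θlo * (1 - s)) + s * p1s + s * c2) / (2 * s) := by
    rw [hp1, hp2]; field_simp; ring
  obtain rfl : pc1 = p1s + Δ := by linarith
  subst hπ1d hπ1c hπ1s hπ2d hπ2c hπ2s hpd1 hpd2 hpc2
  constructor
  · have A : (1 / 2 * (p2s + Δ - (v2 - v1) * θlo + c1) - c1) *
        ((p2s + Δ - 1 / 2 * (p2s + Δ - (v2 - v1) * θlo + c1)) / (v2 - v1) - θlo) * (s / (θt - θlo))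
        - (p1s + Δ - c1) * ((p2s + Δ - (p1s + Δ)) / (v2 - v1) - θlo) * (s / (θt - θlo))
        = s / ((θt - θlo) * (v2 - v1)) * (Δ ^ 2 / 4) := by
      rw [hbr1]; field_simp; ring
    have B : (1 / 2 * (p2s + Δ - (v2 - v1) * θlo + c1) - c1) *
        ((p2s + Δ - 1 / 2 * (p2s + Δ - (v2 - v1) * θlo + c1)) / (v2 - v1) - θlo) * (s / (θt - θlo))
        - (p1s - c1) * ((p2s - p1s) / (v2 - v1) - θlo) * (s / (θt - θlo))
        = s / ((θt - θlo) * (v2 - v1)) * (Δ ^ 2 / 4 + Δ * (p1s - c1)) := by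
      rw [hbr1]; field_simp; ring
    rw [A, B, mul_div_mul_left _ _ hK, show Δ ^ 2 / 4 = Δ * (1 / 4 * Δ) by ring,
      show Δ * (1 / 4 * Δ) + Δ * (p1s - c1) = Δ * (1 / 4 * Δ + (p1s - c1)) by ring,
      mul_div_mul_left _ _ hdne]
  · have A : (((v2 - v1) * (θt - θlo * (1 - s)) + s * (p1s + Δ) + s * c2) / (2 * s) - c2) *
        ((θt - (((v2 - v1) * (θt - θlo * (1 - s)) + s * (p1s + Δ) + s * c2) / (2 * s) - (p1s + Δ)) / (v2 - v1)) * (s / (θt - θlo)) + (1 - s))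
        - (p2s + Δ - c2) * ((θt - (p2s + Δ - (p1s + Δ)) / (v2 - v1)) * (s / (θt - θlo)) + (1 - s))
        = s / ((θt - θlo) * (v2 - v1)) * (Δ ^ 2 / 4) := by
      rw [hbr2]; field_simp; ring
    have B : (((v2 - v1) * (θt - θlo * (1 - s)) + s * (p1s + Δ) + s * c2) / (2 * s) - c2) *
        ((θt - (((v2 - v1) * (θt - θlo * (1 - s)) + s * (p1s + Δ) + s * c2) / (2 * s) - (p1s + Δ)) / (v2 - v1)) * (s / (θt - θlo)) + (1 - s))
        - (p2s - c2) * ((θt - (p2s - p1s) / (v2 - v1)) * (s / (θt - θlo)) + (1 - s))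
        = s / ((θt - θlo) * (v2 - v1)) * (Δ ^ 2 / 4 + Δ * (p2s - c2)) := by
      rw [hbr2]; field_simp; ring
    rw [A, B, mul_div_mul_left _ _ hK, show Δ ^ 2 / 4 = Δ * (1 / 4 * Δ) by ring,
      show Δ * (1 / 4 * Δ) + Δ * (p2s - c2) = Δ * (1 / 4 * Δ + (p2s - c2)) by ring,
      mul_div_mul_left _ _ hdne]
end

section
/- (Corollary, duopoly form) In the two-step-uniform duopoly model with Nash prices p_1^*, p_2^* as given, the difference of noncollusive margins equals (p_2^*−c_2) − (p_1^*−c_1) = ((v_2−v_1)(θ̃ − θ̲ + 2θ̲s) − 2s(c_2−c_1))/(3s); hence there exists μ > 0, namely μ = (v_2−v_1)(θ̃ − θ̲ + 2θ̲s)/(2s), such that if c_2 − c_1 < μ then p_2^* − c_2 > p_1^* − c_1, and therefore (when Δ = p_1^c − p_1^* > 0 and both margins are positive) the higher-quality firm's critical discount factor is strictly smaller: ((1/4)Δ)/((1/4)Δ + (p_2^*−c_2)) < ((1/4)Δ)/((1/4)Δ + (p_1^*−c_1)), i.e. the lowest-quality supplier has the tightest incentive constraint. -/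
/-- (Corollary, duopoly form) Two-step-uniform duopoly: the difference of
noncollusive margins equals
`((v2−v1)(θ̃−θ̲+2θ̲s) − 2s(c2−c1))/(3s)`; hence with
`μ = (v2−v1)(θ̃−θ̲+2θ̲s)/(2s) > 0`, if `c2 − c1 < μ` then the high-quality firm
has the larger margin and (for `Δ > 0` and positive margins) the strictly
smaller critical discount factor: the lowest-quality supplier has the tightest
incentive constraint. -/
theorem corollary_duopoly_low_quality_tightest
    (v1 v2 c1 c2 θlo θt θhi s p1s p2s : ℝ)
    (hv0 : 0 < v1) (hv : v1 < v2) (hc1 : 0 < c1) (hc2 : 0 < c2)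
    (hθ0 : 0 < θlo) (hθ1 : θlo < θt) (hθ2 : θt < θhi) (hs0 : 0 < s) (hs1 : s < 1)
    (hp1 : p1s = ((v2 - v1) * (θt - θlo * (1 + s)) + 2 * s * c1 + s * c2) / (3 * s))
    (hp2 : p2s = ((v2 - v1) * (2 * (θt - θlo) + θlo * s) + 2 * s * c2 + s * c1) / (3 * s)) :
    (p2s - c2) - (p1s - c1)
        = ((v2 - v1) * (θt - θlo + 2 * θlo * s) - 2 * s * (c2 - c1)) / (3 * s)
    ∧ ∃ μ : ℝ, 0 < μ ∧ μ = (v2 - v1) * (θt - θlo + 2 * θlo * s) / (2 * s)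
        ∧ (c2 - c1 < μ →
            p1s - c1 < p2s - c2
            ∧ ∀ Δ : ℝ, 0 < Δ → 0 < p1s - c1 → 0 < p2s - c2 →
                ((1/4) * Δ) / ((1/4) * Δ + (p2s - c2))
                  < ((1/4) * Δ) / ((1/4) * Δ + (p1s - c1))) := by
  have hsne : (3 : ℝ) * s ≠ 0 := by positivity
  have hX : 0 < (v2 - v1) * (θt - θlo + 2 * θlo * s) := by
    have h1 : 0 < v2 - v1 := by linarith
    have h2 : 0 < θt - θlo + 2 * θlo * s := by nlinarith
    positivity
  have hdiff : (p2s - c2) - (p1s - c1)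
      = ((v2 - v1) * (θt - θlo + 2 * θlo * s) - 2 * s * (c2 - c1)) / (3 * s) := by
    rw [hp1, hp2]; field_simp; ring
  refine ⟨hdiff, (v2 - v1) * (θt - θlo + 2 * θlo * s) / (2 * s), by positivity, rfl, ?_⟩
  intro hcμ
  have hlt : p1s - c1 < p2s - c2 := by
    have h2s : 2 * s * (c2 - c1) < (v2 - v1) * (θt - θlo + 2 * θlo * s) := by
      have h := (lt_div_iff₀ (by positivity : (0:ℝ) < 2 * s)).mp hcμ
      nlinarith [h]
    have : 0 < ((v2 - v1) * (θt - θlo + 2 * θlo * s) - 2 * s * (c2 - c1)) / (3 * s) := by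
      apply div_pos (by linarith) (by positivity)
    linarith [hdiff ▸ this]
  refine ⟨hlt, fun Δ hΔ h1 h2 => ?_⟩
  apply div_lt_div_of_pos_left (by positivity) (by positivity)
  linarith
end

section
/- (Häckner variant) In the n-firm Häckner model with cost heterogeneity, for an intermediate firm i (1<i<n): (a) the best response to rival prices p_{i-1}, p_{i+1} is p̂_i = (v_{i+1}(v_i−v_{i-1})p_{i+1} + v_{i-1}(v_{i+1}−v_i)p_{i-1} + v_i(v_{i+1}−v_{i-1})c_i)/(2v_i(v_{i+1}−v_{i-1})); (b) if market shares are fixed at Nash levels (all marginal-consumer locations θ_k^* preserved), the collusive price is p_i^c = p_i^* + (v_1/v_i)Δ with Δ = p_1^c − p_1^*; (c) the optimal deviation price against the neighbors' collusive prices is p_i^d = p_i^* + (1/2)(v_1/v_i)Δ; and (d) with Δ > 0 and m_i = p_i^* − c_i > 0, the critical discount factor equals δ̄_i = (π_i^d − π_i^c)/(π_i^d − π_i^*) = ((1/4)v_1Δ)/((1/4)v_1Δ + v_i·m_i). -/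
set_option maxHeartbeats 1000000


/-- (Häckner variant) n-firm Häckner model with cost heterogeneity, intermediate
firm `i` (`1 < i < n`): (a) the best response to rivals' prices is
`p̂ = (v_{i+1}(v_i−v_{i-1})p_{i+1} + v_{i-1}(v_{i+1}−v_i)p_{i-1} + v_i(v_{i+1}−v_{i-1})c_i)/(2v_i(v_{i+1}−v_{i-1}))`;
(b) if market shares are fixed at Nash levels, `p_i^c = p_i^* + (v_1/v_i)Δ`;
(c) the optimal deviation price is `p_i^* + (1/2)(v_1/v_i)Δ`; (d) the critical
discount factor equals `((1/4)v_1Δ)/((1/4)v_1Δ + v_i m_i)`. -/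
theorem hackner_variant
    (n : ℕ) (hn : 3 ≤ n) (v c pstar pc : ℕ → ℝ) (i : ℕ) (hi1 : 1 < i) (hin : i < n)
    (hv1 : 0 < v 1) (hvmono : ∀ k, 1 ≤ k → k < n → v k < v (k + 1))
    (hcpos : ∀ k, 1 ≤ k → k ≤ n → 0 < c k)
    (Δ : ℝ) (hΔdef : Δ = pc 1 - pstar 1) (hΔ : 0 < Δ)
    (hm : 0 < pstar i - c i)
    (πH : ℝ → ℝ → ℝ → ℝ)
    (hπH : ∀ pm p pp, πH pm p pp = (p - c i)
      * ((v (i + 1) * pp - v i * p) / (v (i + 1) - v i)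
        - (v i * p - v (i - 1) * pm) / (v i - v (i - 1))))
    (brH : ℝ → ℝ → ℝ)
    (hbrH : ∀ pm pp, brH pm pp
      = (v (i + 1) * (v i - v (i - 1)) * pp + v (i - 1) * (v (i + 1) - v i) * pm
          + v i * (v (i + 1) - v (i - 1)) * c i) / (2 * v i * (v (i + 1) - v (i - 1))))
    (hnash : pstar i = brH (pstar (i - 1)) (pstar (i + 1)))
    (hshare : ∀ k, 1 ≤ k → k < n →
      (v (k + 1) * pc (k + 1) - v k * pc k) / (v (k + 1) - v k)
        = (v (k + 1) * pstar (k + 1) - v k * pstar k) / (v (k + 1) - v k)) :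
    (∀ pm pp p : ℝ, p ≠ brH pm pp → πH pm p pp < πH pm (brH pm pp) pp)
    ∧ pc i = pstar i + (v 1 / v i) * Δ
    ∧ brH (pc (i - 1)) (pc (i + 1)) = pstar i + (1/2) * (v 1 / v i) * Δ
    ∧ (πH (pc (i - 1)) (brH (pc (i - 1)) (pc (i + 1))) (pc (i + 1))
          - πH (pc (i - 1)) (pc i) (pc (i + 1)))
        / (πH (pc (i - 1)) (brH (pc (i - 1)) (pc (i + 1))) (pc (i + 1))
          - πH (pstar (i - 1)) (pstar i) (pstar (i + 1)))
      = ((1/4) * v 1 * Δ) / ((1/4) * v 1 * Δ + v i * (pstar i - c i)) := by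
  -- basic index facts
  have hisub : i - 1 + 1 = i := by omega
  have hva : v (i-1) < v i := by
    have := hvmono (i-1) (by omega) (by omega)
    rwa [hisub] at this
  have hvd : v i < v (i+1) := hvmono i (by omega) hin
  -- v k ≥ v 1 for 1 ≤ k ≤ n
  have hge : ∀ k, 1 ≤ k → k ≤ n → v 1 ≤ v k := by
    intro k hk1
    induction k, hk1 using Nat.le_induction with
    | base => intro _; exact le_refl _
    | succ k hk ih =>
      intro hkn
      exact le_trans (ih (by omega)) (le_of_lt (hvmono k hk (by omega)))
  have ha : 0 < v (i-1) := lt_of_lt_of_le hv1 (hge (i-1) (by omega) (by omega))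
  have hb : 0 < v i := lt_trans ha hva
  have hd : 0 < v (i+1) := lt_trans hb hvd
  have hba : (0:ℝ) < v i - v (i-1) := by linarith
  have hdb : (0:ℝ) < v (i+1) - v i := by linarith
  have hda : (0:ℝ) < v (i+1) - v (i-1) := by linarith
  set a := v (i-1) with hadef
  set b := v i with hbdef
  set d := v (i+1) with hddef
  set K : ℝ := b * (d - a) / ((d - b) * (b - a)) with hKdef
  have hK : 0 < K := by positivity
  -- quadratic identity
  have hquad : ∀ pm pp p : ℝ,
      πH pm p pp = πH pm (brH pm pp) pp - K * (p - brH pm pp)^2 := by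
    intro pm pp p
    simp only [hπH, hbrH, hKdef]
    field_simp
    ring
  -- part (a)
  have parta : ∀ pm pp p : ℝ, p ≠ brH pm pp → πH pm p pp < πH pm (brH pm pp) pp := by
    intro pm pp p hne
    have h2 : 0 < (p - brH pm pp)^2 := by
      have : p - brH pm pp ≠ 0 := sub_ne_zero.mpr hne
      positivity
    have := mul_pos hK h2
    rw [hquad pm pp p]
    linarith
  -- price differences
  have hdiff : ∀ k, 1 ≤ k → k ≤ n → v k * (pc k - pstar k) = v 1 * Δ := by
    intro k hk1
    induction k, hk1 using Nat.le_induction with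
    | base => intro _; rw [hΔdef]
    | succ k hk ih =>
      intro hkn
      have hkn' : k < n := by omega
      have hvk := hvmono k hk hkn'
      have hne : v (k+1) - v k ≠ 0 := ne_of_gt (by linarith)
      have hs := hshare k hk hkn'
      have ihk := ih (by omega)
      field_simp at hs
      nlinarith [hs, ihk]
  have hvineq : v 1 ≤ v i := hge i (by omega) (by omega)
  -- part (b)
  have hpci : pc i = pstar i + (v 1 / v i) * Δ := by
    have h := hdiff i (by omega) (by omega)
    have h' : pc i - pstar i = v 1 * Δ / b := by
      rw [eq_div_iff (ne_of_gt hb)]; linear_combination h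
    linear_combination h'
  have hpcm : pc (i-1) = pstar (i-1) + (v 1 * Δ) / a := by
    have h := hdiff (i-1) (by omega) (by omega)
    rw [← hadef] at h
    have h' : pc (i-1) - pstar (i-1) = v 1 * Δ / a := by
      rw [eq_div_iff (ne_of_gt ha)]; linear_combination h
    linear_combination h'
  have hpcp : pc (i+1) = pstar (i+1) + (v 1 * Δ) / d := by
    have h := hdiff (i+1) (by omega) (by omega)
    rw [← hddef] at h
    have h' : pc (i+1) - pstar (i+1) = v 1 * Δ / d := by
      rw [eq_div_iff (ne_of_gt hd)]; linear_combination h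
    linear_combination h'
  -- Nash FOC: eliminate pstar (i+1)
  have hE : pstar (i+1) = (2*b*(d-a)*pstar i - a*(d-b)*pstar (i-1) - b*(d-a)*c i)
      / (d*(b-a)) := by
    rw [hbrH] at hnash
    field_simp at hnash ⊢
    linarith [hnash]
  -- part (c)
  have partc : brH (pc (i-1)) (pc (i+1)) = pstar i + (1/2) * (v 1 / v i) * Δ := by
    rw [hbrH, hpcm, hpcp, hE]
    rw [← hbdef]
    field_simp
    ring
  set m : ℝ := pstar i - c i with hmdef
  set D : ℝ := v 1 * Δ with hDdef
  have hDpos : 0 < D := by rw [hDdef]; positivity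
  -- the three profit levels
  have h1 : πH (pstar (i-1)) (pstar i) (pstar (i+1)) = K * m^2 := by
    rw [hπH, hE, hKdef, hmdef]
    field_simp
    ring
  have h2 : πH (pc (i-1)) (pc i) (pc (i+1)) = K * (m^2 + m * D / b) := by
    rw [hπH, hpcm, hpci, hpcp, hE, hKdef, hmdef, hDdef, ← hbdef]
    field_simp
    ring
  have h3 : πH (pc (i-1)) (pstar i + (1/2) * (v 1 / v i) * Δ) (pc (i+1))
      = K * (m + D/(2*b))^2 := by
    rw [hπH, hpcm, hpcp, hE, hKdef, hmdef, hDdef, ← hbdef]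
    field_simp
    ring
  refine ⟨parta, hpci, partc, ?_⟩
  rw [partc, h3, h2, h1]
  have hden1 : K * (m + D/(2*b))^2 - K * m^2 > 0 := by
    have hmb : m < m + D/(2*b) := by
      have : 0 < D/(2*b) := by positivity
      linarith
    have : m^2 < (m + D/(2*b))^2 := by nlinarith
    nlinarith
  have hden2 : (0:ℝ) < (1/4) * v 1 * Δ + v i * (pstar i - c i) := by
    have h1 : 0 < v 1 * Δ := by positivity
    have h2 : 0 < v i * (pstar i - c i) := mul_pos hb hm
    linarith
  rw [div_eq_div_iff (ne_of_gt hden1) (ne_of_gt hden2)]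
  rw [← hbdef, ← hmdef]
  have hDq : (1/4) * v 1 * Δ = D/4 := by rw [hDdef]; ring
  rw [hDq]
  field_simp
  ring
end
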